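/- Let α ≥ 0, β ≥ 0, γ ≥ 0, σ > 0 with ασ ≥ γ², and set κ := 3β/2 + 9σ. Then for every real-valued u ∈ C_c^∞(ℝ³×ℝ³): ⟨Au, u⟩_X̃ ≤ κ ‖u‖_X̃², where ⟨f,g⟩_X̃ := ∫∫ f g dx dv + Σ_{i=1}^{3} ∫∫ v_i⁴ f g dx dv and ‖u‖_X̃² := ⟨u,u⟩_X̃; i.e. A − κI is dissipative on C_c^∞ with respect to the X̃ inner product. -/

import Mathlib

open MeasureTheory Real Filter ENNReal

noncomputable section

abbrev E3 := EuclideanSpace ℝ (Fin 3)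

/-- The `i`-th standard basis vector of `ℝ³`. -/
def e3 (i : Fin 3) : E3 := EuclideanSpace.single i 1

/-- The quantum Fokker-Planck generator
`Au = −v·∇_x u + β div_v(v u) + σ Δ_v u + 2γ div_v(∇_x u) + α Δ_x u`. -/
def Aop (α β γ σ : ℝ) (u : E3 × E3 → ℝ) (p : E3 × E3) : ℝ :=
  -(∑ i : Fin 3, p.2 i * fderiv ℝ u p (e3 i, 0))
    + β * (∑ i : Fin 3, fderiv ℝ (fun q : E3 × E3 => q.2 i * u q) p (0, e3 i))
    + σ * (∑ i : Fin 3, fderiv ℝ (fun q => fderiv ℝ u q (0, e3 i)) p (0, e3 i))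
    + 2 * γ * (∑ i : Fin 3, fderiv ℝ (fun q => fderiv ℝ u q (e3 i, 0)) p (0, e3 i))
    + α * (∑ i : Fin 3, fderiv ℝ (fun q => fderiv ℝ u q (e3 i, 0)) p (e3 i, 0))

/-- The `X̃` inner product `⟨f,g⟩ = ∫∫ f g + Σ_i ∫∫ v_i⁴ f g`. -/
def innerXt (f g : E3 × E3 → ℝ) : ℝ :=
  (∫ p : E3 × E3, f p * g p) +
    ∑ i : Fin 3, ∫ p : E3 × E3, (p.2 i) ^ 4 * f p * g p

namespace QFPaux
abbrev EE := E3 × E3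

instance : Measure.IsAddHaarMeasure (volume : Measure EE) :=
  Measure.prod.instIsAddHaarMeasure _ _

def cv (i : Fin 3) : EE →L[ℝ] ℝ := (EuclideanSpace.proj i).comp (ContinuousLinearMap.snd ℝ E3 E3)

lemma cv_apply (i : Fin 3) (q : EE) : cv i q = q.2 i := rfl

@[simp] lemma cv_x (i j : Fin 3) : cv i ((e3 j, 0) : EE) = 0 := by
  simp [cv_apply]

@[simp] lemma cv_v (i j : Fin 3) : cv i ((0, e3 j) : EE) = if i = j then 1 else 0 := by
  simp [cv_apply, e3, EuclideanSpace.single_apply]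

lemma hasFD_cv (i : Fin 3) (p : EE) : HasFDerivAt (fun q : EE => q.2 i) (cv i) p :=
  (cv i).hasFDerivAt

lemma hasFD_pow {f : EE → ℝ} {f' : EE →L[ℝ] ℝ} {p : EE} (hf : HasFDerivAt f f' p) :
    ∀ n : ℕ, HasFDerivAt (fun q => f q ^ (n + 1)) ((((n : ℝ) + 1) * f p ^ n) • f') p := by
  intro n
  induction n with
  | zero => simpa using hf
  | succ n ih =>
    have h := ih.mul hf
    have heq : (fun y => f y ^ (n + 1) * f y) = fun y => f y ^ (n + 1 + 1) := by
      funext y; ring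
    rw [show ((fun q => f q ^ (n + 1)) * f) = fun y => f y ^ (n + 1) * f y from rfl, heq] at h
    refine h.congr_fderiv ?_
    rw [smul_smul, ← add_smul]
    congr 1
    push_cast
    ring

def wf : EE → ℝ := fun p => 1 + ∑ i : Fin 3, (p.2 i) ^ 4

def wD (p : EE) : EE →L[ℝ] ℝ := ∑ i : Fin 3, ((4 : ℝ) * (p.2 i) ^ 3) • cv i

lemma hasFD_wf (p : EE) : HasFDerivAt wf (wD p) p := by
  have h : HasFDerivAt (fun q : EE => ∑ i : Fin 3, (q.2 i) ^ 4) (wD p) p := by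
    apply HasFDerivAt.fun_sum
    intro i _
    have h4 := hasFD_pow (hasFD_cv i p) 3
    have : (((3 : ℕ) : ℝ) + 1) * (p.2 i) ^ 3 = (4 : ℝ) * (p.2 i) ^ 3 := by norm_num
    rw [this] at h4
    exact h4
  exact h.const_add 1

@[simp] lemma wD_x (p : EE) (j : Fin 3) : wD p ((e3 j, 0) : EE) = 0 := by
  simp [wD]

@[simp] lemma wD_v (p : EE) (j : Fin 3) : wD p ((0, e3 j) : EE) = 4 * (p.2 j) ^ 3 := by
  simp [wD, mul_ite, Finset.sum_ite_eq]

def c3 (i : Fin 3) : EE → ℝ := fun p => (p.2 i) ^ 3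

lemma hasFD_c3 (i : Fin 3) (p : EE) :
    HasFDerivAt (c3 i) (((3 : ℝ) * (p.2 i) ^ 2) • cv i) p := by
  have h := hasFD_pow (hasFD_cv i p) 2
  have : (((2 : ℕ) : ℝ) + 1) * (p.2 i) ^ 2 = (3 : ℝ) * (p.2 i) ^ 2 := by norm_num
  rw [this] at h
  exact h

lemma contDiff_coord (i : Fin 3) : ContDiff ℝ (⊤ : ℕ∞) (fun q : EE => q.2 i) := (cv i).contDiff

lemma contDiff_wf : ContDiff ℝ (⊤ : ℕ∞) wf :=
  contDiff_const.add (ContDiff.sum fun i _ => (contDiff_coord i).pow 4)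

lemma contDiff_gv (i : Fin 3) : ContDiff ℝ (⊤ : ℕ∞) (fun q : EE => wf q * q.2 i) :=
  contDiff_wf.mul (contDiff_coord i)

lemma contDiff_c3 (i : Fin 3) : ContDiff ℝ (⊤ : ℕ∞) (c3 i) := (contDiff_coord i).pow 3

-- pointwise derivative values of the weights
lemma fd_wf_x (p : EE) (j : Fin 3) : fderiv ℝ wf p ((e3 j, 0) : EE) = 0 := by
  rw [(hasFD_wf p).fderiv]; simp

lemma fd_wf_v (p : EE) (j : Fin 3) : fderiv ℝ wf p ((0, e3 j) : EE) = 4 * (p.2 j) ^ 3 := by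
  rw [(hasFD_wf p).fderiv]; simp

lemma hasFD_gv (i : Fin 3) (p : EE) :
    HasFDerivAt (fun q : EE => wf q * q.2 i) (wf p • cv i + p.2 i • wD p) p :=
  (hasFD_wf p).mul (hasFD_cv i p)

lemma fd_gv_x (i : Fin 3) (p : EE) :
    fderiv ℝ (fun q : EE => wf q * q.2 i) p ((e3 i, 0) : EE) = 0 := by
  rw [(hasFD_gv i p).fderiv]; simp

lemma fd_gv_v (i : Fin 3) (p : EE) :
    fderiv ℝ (fun q : EE => wf q * q.2 i) p ((0, e3 i) : EE) = wf p + 4 * (p.2 i) ^ 4 := by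
  rw [(hasFD_gv i p).fderiv]; simp; ring

lemma fd_c3_x (i : Fin 3) (p : EE) : fderiv ℝ (c3 i) p ((e3 i, 0) : EE) = 0 := by
  rw [(hasFD_c3 i p).fderiv]; simp

lemma fd_c3_v (i : Fin 3) (p : EE) : fderiv ℝ (c3 i) p ((0, e3 i) : EE) = 3 * (p.2 i) ^ 2 := by
  rw [(hasFD_c3 i p).fderiv]; simp

end QFPaux

namespace QFPaux

lemma contDiff_fderiv_apply {f : EE → ℝ} (hf : ContDiff ℝ (⊤ : ℕ∞) f) (v : EE) :
    ContDiff ℝ (⊤ : ℕ∞) (fun p => fderiv ℝ f p v) :=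
  (hf.fderiv_right (by simp)).clm_apply contDiff_const

/-- Integration by parts: if `f` is smooth with compact support and `g` smooth,
then `∫ f ∂ᵥg = -∫ (∂ᵥf) g`. -/
lemma ibp {f g : EE → ℝ} (hf : ContDiff ℝ (⊤ : ℕ∞) f) (hcf : HasCompactSupport f)
    (hg : ContDiff ℝ (⊤ : ℕ∞) g) (v : EE) :
    ∫ p : EE, f p * fderiv ℝ g p v = - ∫ p : EE, fderiv ℝ f p v * g p := by
  apply integral_mul_fderiv_eq_neg_fderiv_mul_of_integrable
  · exact (((contDiff_fderiv_apply hf v).continuous.mul hg.continuous).integrable_of_hasCompactSupport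
      ((hcf.fderiv_apply ℝ v).mul_right))
  · exact ((hf.continuous.mul (contDiff_fderiv_apply hg v).continuous).integrable_of_hasCompactSupport
      hcf.mul_right)
  · exact ((hf.continuous.mul hg.continuous).integrable_of_hasCompactSupport hcf.mul_right)
  · exact fun x _ => hf.differentiable (by simp) x
  · exact fun x _ => hg.differentiable (by simp) x

lemma fd_mul_gen {f g : EE → ℝ} {p : EE} (hfp : DifferentiableAt ℝ f p)
    (hgp : DifferentiableAt ℝ g p) (v : EE) :
    fderiv ℝ (fun q => f q * g q) p v = fderiv ℝ f p v * g p + f p * fderiv ℝ g p v := by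
  rw [fderiv_fun_mul hfp hgp]
  simp [smul_eq_mul]
  ring

variable {u : EE → ℝ}

lemma fd_uu (hu : ContDiff ℝ (⊤ : ℕ∞) u) : ∀ (p : EE) (v : EE),
    fderiv ℝ (fun q => u q * u q) p v = 2 * (u p * fderiv ℝ u p v) := by
  intro p v
  rw [fd_mul_gen ((hu.differentiable (by simp)) p) ((hu.differentiable (by simp)) p) v]
  ring

lemma int_mul_u (hu : ContDiff ℝ (⊤ : ℕ∞) u) (hc : HasCompactSupport u) {g : EE → ℝ}
    (hg : Continuous g) : Integrable (fun p : EE => g p * u p) :=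
  (hg.mul hu.continuous).integrable_of_hasCompactSupport hc.mul_left

lemma int_mul_du (hu : ContDiff ℝ (⊤ : ℕ∞) u) (hc : HasCompactSupport u) {g : EE → ℝ}
    (hg : Continuous g) (v w : EE) :
    Integrable (fun p : EE => (g p * fderiv ℝ u p v) * fderiv ℝ u p w) := by
  have h1 : Continuous fun p : EE => g p * fderiv ℝ u p v :=
    hg.mul (contDiff_fderiv_apply hu v).continuous
  exact (h1.mul (contDiff_fderiv_apply hu w).continuous).integrable_of_hasCompactSupport
    (hc.fderiv_apply ℝ w).mul_left

end QFPaux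

namespace QFPaux

variable {u : EE → ℝ}

/-- `∫ w u²` -/
def Wint (u : EE → ℝ) : ℝ := ∫ p : EE, (wf p * u p) * u p
/-- `∫ vᵢ⁴ u²` -/
def Qint (u : EE → ℝ) (i : Fin 3) : ℝ := ∫ p : EE, ((p.2 i) ^ 4 * u p) * u p
/-- `∫ vᵢ² u²` -/
def Rint (u : EE → ℝ) (i : Fin 3) : ℝ := ∫ p : EE, ((p.2 i) ^ 2 * u p) * u p
/-- `∫ w (∂ₓᵢ u)²` -/
def Aint (u : EE → ℝ) (i : Fin 3) : ℝ :=
  ∫ p : EE, (wf p * fderiv ℝ u p ((e3 i, 0) : EE)) * fderiv ℝ u p ((e3 i, 0) : EE)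
/-- `∫ w (∂ᵥᵢ u)²` -/
def Bint (u : EE → ℝ) (i : Fin 3) : ℝ :=
  ∫ p : EE, (wf p * fderiv ℝ u p ((0, e3 i) : EE)) * fderiv ℝ u p ((0, e3 i) : EE)
/-- `∫ w (∂ₓᵢ u)(∂ᵥᵢ u)` -/
def Cint (u : EE → ℝ) (i : Fin 3) : ℝ :=
  ∫ p : EE, (wf p * fderiv ℝ u p ((e3 i, 0) : EE)) * fderiv ℝ u p ((0, e3 i) : EE)

lemma P1 (hu : ContDiff ℝ (⊤ : ℕ∞) u) (hc : HasCompactSupport u) (i : Fin 3) :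
    ∫ p : EE, (wf p * (p.2 i * fderiv ℝ u p ((e3 i, 0) : EE))) * u p = 0 := by
  have h := ibp (hu.mul hu) hc.mul_right (contDiff_gv i) ((e3 i, 0) : EE)
  simp only [fd_gv_x, mul_zero, integral_zero, fd_uu hu] at h
  have e : (fun p : EE => (2 : ℝ) * (u p * fderiv ℝ u p ((e3 i, 0) : EE)) * (wf p * p.2 i))
      = fun p : EE => 2 * ((wf p * (p.2 i * fderiv ℝ u p ((e3 i, 0) : EE))) * u p) := by
    funext p; ring
  rw [e, integral_const_mul] at h
  linarith

lemma P2 (hu : ContDiff ℝ (⊤ : ℕ∞) u) (hc : HasCompactSupport u) (i : Fin 3) :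
    ∫ p : EE, (wf p * (p.2 i * fderiv ℝ u p ((0, e3 i) : EE))) * u p
      = -(1/2) * Wint u - 2 * Qint u i := by
  have h := ibp (hu.mul hu) hc.mul_right (contDiff_gv i) ((0, e3 i) : EE)
  simp only [fd_gv_v, fd_uu hu] at h
  have e1 : (fun p : EE => (u p * u p) * (wf p + 4 * (p.2 i) ^ 4))
      = fun p : EE => (wf p * u p) * u p + (4 : ℝ) * (((p.2 i) ^ 4 * u p) * u p) := by
    funext p; ring
  have e2 : (fun p : EE => (2 : ℝ) * (u p * fderiv ℝ u p ((0, e3 i) : EE)) * (wf p * p.2 i))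
      = fun p : EE => 2 * ((wf p * (p.2 i * fderiv ℝ u p ((0, e3 i) : EE))) * u p) := by
    funext p; ring
  have ia : Integrable fun p : EE => (wf p * u p) * u p :=
    int_mul_u hu hc (contDiff_wf.continuous.mul hu.continuous)
  have ib : Integrable fun p : EE => (4 : ℝ) * (((p.2 i) ^ 4 * u p) * u p) :=
    (int_mul_u hu hc ((((contDiff_coord i).pow 4).continuous).mul hu.continuous)).const_mul 4
  rw [e1, e2, integral_add ia ib, integral_const_mul, integral_const_mul] at h
  simp only [Wint, Qint]
  linarith

lemma P3a (hu : ContDiff ℝ (⊤ : ℕ∞) u) (hc : HasCompactSupport u) (i : Fin 3) :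
    ∫ p : EE, ((p.2 i) ^ 3 * fderiv ℝ u p ((0, e3 i) : EE)) * u p = -(3/2) * Rint u i := by
  have h := ibp (hu.mul hu) hc.mul_right (contDiff_c3 i) ((0, e3 i) : EE)
  simp only [fd_c3_v, fd_uu hu, c3] at h
  have e1 : (fun p : EE => (u p * u p) * (3 * (p.2 i) ^ 2))
      = fun p : EE => (3 : ℝ) * (((p.2 i) ^ 2 * u p) * u p) := by funext p; ring
  have e2 : (fun p : EE => (2 : ℝ) * (u p * fderiv ℝ u p ((0, e3 i) : EE)) * (p.2 i) ^ 3)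
      = fun p : EE => 2 * (((p.2 i) ^ 3 * fderiv ℝ u p ((0, e3 i) : EE)) * u p) := by
    funext p; ring
  rw [e1, e2, integral_const_mul, integral_const_mul] at h
  simp only [Rint]
  linarith

lemma P4a (hu : ContDiff ℝ (⊤ : ℕ∞) u) (hc : HasCompactSupport u) (i : Fin 3) :
    ∫ p : EE, ((p.2 i) ^ 3 * fderiv ℝ u p ((e3 i, 0) : EE)) * u p = 0 := by
  have h := ibp (hu.mul hu) hc.mul_right (contDiff_c3 i) ((e3 i, 0) : EE)
  simp only [fd_c3_x, mul_zero, integral_zero, fd_uu hu, c3] at h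
  have e : (fun p : EE => (2 : ℝ) * (u p * fderiv ℝ u p ((e3 i, 0) : EE)) * (p.2 i) ^ 3)
      = fun p : EE => 2 * (((p.2 i) ^ 3 * fderiv ℝ u p ((e3 i, 0) : EE)) * u p) := by
    funext p; ring
  rw [e, integral_const_mul] at h
  linarith

lemma P3 (hu : ContDiff ℝ (⊤ : ℕ∞) u) (hc : HasCompactSupport u) (i : Fin 3) :
    ∫ p : EE, (wf p * fderiv ℝ (fun q => fderiv ℝ u q ((0, e3 i) : EE)) p ((0, e3 i) : EE)) * u p
      = -(Bint u i) + 6 * Rint u i := by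
  have hb : ContDiff ℝ (⊤ : ℕ∞) (fun q : EE => fderiv ℝ u q ((0, e3 i) : EE)) :=
    contDiff_fderiv_apply hu _
  have h := ibp (hu.mul hb) hc.mul_right contDiff_wf ((0, e3 i) : EE)
  have key : ∀ p : EE, fderiv ℝ (fun q : EE => u q * fderiv ℝ u q ((0, e3 i) : EE)) p ((0, e3 i) : EE)
      = fderiv ℝ u p ((0, e3 i) : EE) * fderiv ℝ u p ((0, e3 i) : EE)
        + u p * fderiv ℝ (fun q : EE => fderiv ℝ u q ((0, e3 i) : EE)) p ((0, e3 i) : EE) :=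
    fun p => fd_mul_gen ((hu.differentiable (by simp)) p) ((hb.differentiable (by simp)) p) _
  simp only [key, fd_wf_v] at h
  have e2 : (fun p : EE => (fderiv ℝ u p ((0, e3 i) : EE) * fderiv ℝ u p ((0, e3 i) : EE)
        + u p * fderiv ℝ (fun q : EE => fderiv ℝ u q ((0, e3 i) : EE)) p ((0, e3 i) : EE)) * wf p)
      = fun p : EE => ((wf p * fderiv ℝ u p ((0, e3 i) : EE)) * fderiv ℝ u p ((0, e3 i) : EE))
        + ((wf p * fderiv ℝ (fun q : EE => fderiv ℝ u q ((0, e3 i) : EE)) p ((0, e3 i) : EE)) * u p) := by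
    funext p; ring
  have iB : Integrable fun p : EE =>
      (wf p * fderiv ℝ u p ((0, e3 i) : EE)) * fderiv ℝ u p ((0, e3 i) : EE) :=
    int_mul_du hu hc contDiff_wf.continuous _ _
  have it4 : Integrable fun p : EE =>
      (wf p * fderiv ℝ (fun q : EE => fderiv ℝ u q ((0, e3 i) : EE)) p ((0, e3 i) : EE)) * u p :=
    int_mul_u hu hc (contDiff_wf.continuous.mul (contDiff_fderiv_apply hb _).continuous)
  have e1 : (fun p : EE => (u p * fderiv ℝ u p ((0, e3 i) : EE)) * (4 * (p.2 i) ^ 3))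
      = fun p : EE => (4 : ℝ) * (((p.2 i) ^ 3 * fderiv ℝ u p ((0, e3 i) : EE)) * u p) := by
    funext p; ring
  rw [e1, e2, integral_add iB it4, integral_const_mul, P3a hu hc i] at h
  simp only [Bint]
  linarith

lemma P4 (hu : ContDiff ℝ (⊤ : ℕ∞) u) (hc : HasCompactSupport u) (i : Fin 3) :
    ∫ p : EE, (wf p * fderiv ℝ (fun q => fderiv ℝ u q ((e3 i, 0) : EE)) p ((0, e3 i) : EE)) * u p
      = -(Cint u i) := by
  have ha : ContDiff ℝ (⊤ : ℕ∞) (fun q : EE => fderiv ℝ u q ((e3 i, 0) : EE)) :=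
    contDiff_fderiv_apply hu _
  have h := ibp (hu.mul ha) hc.mul_right contDiff_wf ((0, e3 i) : EE)
  have key : ∀ p : EE, fderiv ℝ (fun q : EE => u q * fderiv ℝ u q ((e3 i, 0) : EE)) p ((0, e3 i) : EE)
      = fderiv ℝ u p ((0, e3 i) : EE) * fderiv ℝ u p ((e3 i, 0) : EE)
        + u p * fderiv ℝ (fun q : EE => fderiv ℝ u q ((e3 i, 0) : EE)) p ((0, e3 i) : EE) :=
    fun p => fd_mul_gen ((hu.differentiable (by simp)) p) ((ha.differentiable (by simp)) p) _
  simp only [key, fd_wf_v] at h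
  have e2 : (fun p : EE => (fderiv ℝ u p ((0, e3 i) : EE) * fderiv ℝ u p ((e3 i, 0) : EE)
        + u p * fderiv ℝ (fun q : EE => fderiv ℝ u q ((e3 i, 0) : EE)) p ((0, e3 i) : EE)) * wf p)
      = fun p : EE => ((wf p * fderiv ℝ u p ((e3 i, 0) : EE)) * fderiv ℝ u p ((0, e3 i) : EE))
        + ((wf p * fderiv ℝ (fun q : EE => fderiv ℝ u q ((e3 i, 0) : EE)) p ((0, e3 i) : EE)) * u p) := by
    funext p; ring
  have iC : Integrable fun p : EE =>
      (wf p * fderiv ℝ u p ((e3 i, 0) : EE)) * fderiv ℝ u p ((0, e3 i) : EE) :=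
    int_mul_du hu hc contDiff_wf.continuous _ _
  have it5 : Integrable fun p : EE =>
      (wf p * fderiv ℝ (fun q : EE => fderiv ℝ u q ((e3 i, 0) : EE)) p ((0, e3 i) : EE)) * u p :=
    int_mul_u hu hc (contDiff_wf.continuous.mul (contDiff_fderiv_apply ha _).continuous)
  have e1 : (fun p : EE => (u p * fderiv ℝ u p ((e3 i, 0) : EE)) * (4 * (p.2 i) ^ 3))
      = fun p : EE => (4 : ℝ) * (((p.2 i) ^ 3 * fderiv ℝ u p ((e3 i, 0) : EE)) * u p) := by
    funext p; ring
  rw [e1, e2, integral_add iC it5, integral_const_mul, P4a hu hc i] at h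
  simp only [Cint]
  linarith

lemma P5 (hu : ContDiff ℝ (⊤ : ℕ∞) u) (hc : HasCompactSupport u) (i : Fin 3) :
    ∫ p : EE, (wf p * fderiv ℝ (fun q => fderiv ℝ u q ((e3 i, 0) : EE)) p ((e3 i, 0) : EE)) * u p
      = -(Aint u i) := by
  have ha : ContDiff ℝ (⊤ : ℕ∞) (fun q : EE => fderiv ℝ u q ((e3 i, 0) : EE)) :=
    contDiff_fderiv_apply hu _
  have h := ibp (hu.mul ha) hc.mul_right contDiff_wf ((e3 i, 0) : EE)
  have key : ∀ p : EE, fderiv ℝ (fun q : EE => u q * fderiv ℝ u q ((e3 i, 0) : EE)) p ((e3 i, 0) : EE)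
      = fderiv ℝ u p ((e3 i, 0) : EE) * fderiv ℝ u p ((e3 i, 0) : EE)
        + u p * fderiv ℝ (fun q : EE => fderiv ℝ u q ((e3 i, 0) : EE)) p ((e3 i, 0) : EE) :=
    fun p => fd_mul_gen ((hu.differentiable (by simp)) p) ((ha.differentiable (by simp)) p) _
  simp only [key, fd_wf_x, mul_zero, integral_zero] at h
  have e2 : (fun p : EE => (fderiv ℝ u p ((e3 i, 0) : EE) * fderiv ℝ u p ((e3 i, 0) : EE)
        + u p * fderiv ℝ (fun q : EE => fderiv ℝ u q ((e3 i, 0) : EE)) p ((e3 i, 0) : EE)) * wf p)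
      = fun p : EE => ((wf p * fderiv ℝ u p ((e3 i, 0) : EE)) * fderiv ℝ u p ((e3 i, 0) : EE))
        + ((wf p * fderiv ℝ (fun q : EE => fderiv ℝ u q ((e3 i, 0) : EE)) p ((e3 i, 0) : EE)) * u p) := by
    funext p; ring
  have iA : Integrable fun p : EE =>
      (wf p * fderiv ℝ u p ((e3 i, 0) : EE)) * fderiv ℝ u p ((e3 i, 0) : EE) :=
    int_mul_du hu hc contDiff_wf.continuous _ _
  have it6 : Integrable fun p : EE =>
      (wf p * fderiv ℝ (fun q : EE => fderiv ℝ u q ((e3 i, 0) : EE)) p ((e3 i, 0) : EE)) * u p :=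
    int_mul_u hu hc (contDiff_wf.continuous.mul (contDiff_fderiv_apply ha _).continuous)
  rw [e2, integral_add iA it6] at h
  simp only [Aint]
  linarith

end QFPaux

namespace QFPaux

variable {u : EE → ℝ}

lemma hcoord (i : Fin 3) : Continuous fun q : EE => q.2 i := (contDiff_coord i).continuous

lemma hbeta (hu : ContDiff ℝ (⊤ : ℕ∞) u) : ∀ (i : Fin 3) (p : EE),
    fderiv ℝ (fun q : EE => q.2 i * u q) p ((0, e3 i) : EE)
      = u p + p.2 i * fderiv ℝ u p ((0, e3 i) : EE) := by
  intro i p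
  rw [fd_mul_gen (((contDiff_coord i).differentiable (by simp)) p) ((hu.differentiable (by simp)) p)]
  rw [(hasFD_cv i p).fderiv]
  simp

lemma innerXt_eq {f g : EE → ℝ} (hf : Continuous f) (hg : Continuous g)
    (hcs : HasCompactSupport fun p : EE => f p * g p) :
    innerXt f g = ∫ p : EE, (wf p * f p) * g p := by
  have hint : Integrable (fun p : EE => f p * g p) :=
    (hf.mul hg).integrable_of_hasCompactSupport hcs
  have hint4 : ∀ i : Fin 3, Integrable fun p : EE => (p.2 i) ^ 4 * f p * g p := by
    intro i
    have e : (fun p : EE => (p.2 i) ^ 4 * f p * g p)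
        = fun p : EE => (p.2 i) ^ 4 * (f p * g p) := by funext p; ring
    rw [e]
    exact (((contDiff_coord i).pow 4).continuous.mul (hf.mul hg)).integrable_of_hasCompactSupport
      hcs.mul_left
  have e : (fun p : EE => (wf p * f p) * g p)
      = fun p : EE => f p * g p + ∑ i : Fin 3, (p.2 i) ^ 4 * f p * g p := by
    funext p; simp only [wf, Fin.sum_univ_three]; ring
  rw [innerXt, e, integral_add hint (integrable_finset_sum _ fun i _ => hint4 i),
      integral_finset_sum _ fun i _ => hint4 i]

end QFPaux

open QFPaux

/-- Lemma 2.6: `A − κ I` with `κ = 3β/2 + 9σ` is dissipative in `X̃` on `C_c^∞`. -/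
theorem Aop_dissipative_Xtilde (α β γ σ : ℝ) (hα : 0 ≤ α) (hβ : 0 ≤ β) (hγ : 0 ≤ γ)
    (hσ : 0 < σ) (hcoeff : γ ^ 2 ≤ α * σ) :
    ∀ u : E3 × E3 → ℝ, ContDiff ℝ (⊤ : ℕ∞) u → HasCompactSupport u →
      innerXt (Aop α β γ σ u) u ≤ (3 * β / 2 + 9 * σ) * innerXt u u := by
  intro u hu hc
  -- continuity of `Aop u`
  have hbcd : ∀ i : Fin 3, ContDiff ℝ (⊤ : ℕ∞) (fun q : EE => q.2 i * u q) :=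
    fun i => (contDiff_coord i).mul hu
  have hA : Continuous fun p : EE => Aop α β γ σ u p := by
    simp only [Aop]
    exact ((((continuous_finset_sum _ fun i _ =>
        (hcoord i).mul (contDiff_fderiv_apply hu _).continuous).neg.add
      (continuous_const.mul (continuous_finset_sum _ fun i _ =>
        (contDiff_fderiv_apply (hbcd i) _).continuous))).add
      (continuous_const.mul (continuous_finset_sum _ fun i _ =>
        (contDiff_fderiv_apply (contDiff_fderiv_apply hu _) _).continuous))).add
      (continuous_const.mul (continuous_finset_sum _ fun i _ =>
        (contDiff_fderiv_apply (contDiff_fderiv_apply hu _) _).continuous))).add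
      (continuous_const.mul (continuous_finset_sum _ fun i _ =>
        (contDiff_fderiv_apply (contDiff_fderiv_apply hu _) _).continuous))
  rw [innerXt_eq hA hu.continuous hc.mul_left,
      innerXt_eq hu.continuous hu.continuous hc.mul_right]
  -- integrability of the six building blocks
  have I1 : ∀ i : Fin 3, Integrable fun p : EE =>
      (wf p * (p.2 i * fderiv ℝ u p ((e3 i, 0) : EE))) * u p :=
    fun i => int_mul_u hu hc (contDiff_wf.continuous.mul
      ((hcoord i).mul (contDiff_fderiv_apply hu _).continuous))
  have I2 : Integrable fun p : EE => (wf p * u p) * u p :=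
    int_mul_u hu hc (contDiff_wf.continuous.mul hu.continuous)
  have I3 : ∀ i : Fin 3, Integrable fun p : EE =>
      (wf p * (p.2 i * fderiv ℝ u p ((0, e3 i) : EE))) * u p :=
    fun i => int_mul_u hu hc (contDiff_wf.continuous.mul
      ((hcoord i).mul (contDiff_fderiv_apply hu _).continuous))
  have I4 : ∀ i : Fin 3, Integrable fun p : EE =>
      (wf p * fderiv ℝ (fun q => fderiv ℝ u q ((0, e3 i) : EE)) p ((0, e3 i) : EE)) * u p :=
    fun i => int_mul_u hu hc (contDiff_wf.continuous.mul
      (contDiff_fderiv_apply (contDiff_fderiv_apply hu _) _).continuous)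
  have I5 : ∀ i : Fin 3, Integrable fun p : EE =>
      (wf p * fderiv ℝ (fun q => fderiv ℝ u q ((e3 i, 0) : EE)) p ((0, e3 i) : EE)) * u p :=
    fun i => int_mul_u hu hc (contDiff_wf.continuous.mul
      (contDiff_fderiv_apply (contDiff_fderiv_apply hu _) _).continuous)
  have I6 : ∀ i : Fin 3, Integrable fun p : EE =>
      (wf p * fderiv ℝ (fun q => fderiv ℝ u q ((e3 i, 0) : EE)) p ((e3 i, 0) : EE)) * u p :=
    fun i => int_mul_u hu hc (contDiff_wf.continuous.mul
      (contDiff_fderiv_apply (contDiff_fderiv_apply hu _) _).continuous)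
  -- pointwise expansion of the weighted integrand
  have hpt : (fun p : EE => (wf p * Aop α β γ σ u p) * u p) = fun p : EE =>
      ∑ i : Fin 3,
        ((-1 : ℝ) * ((wf p * (p.2 i * fderiv ℝ u p ((e3 i, 0) : EE))) * u p)
         + (β * ((wf p * u p) * u p)
         + (β * ((wf p * (p.2 i * fderiv ℝ u p ((0, e3 i) : EE))) * u p)
         + (σ * ((wf p * fderiv ℝ (fun q => fderiv ℝ u q ((0, e3 i) : EE)) p ((0, e3 i) : EE)) * u p)
         + ((2 * γ) * ((wf p * fderiv ℝ (fun q => fderiv ℝ u q ((e3 i, 0) : EE)) p ((0, e3 i) : EE)) * u p)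
         + α * ((wf p * fderiv ℝ (fun q => fderiv ℝ u q ((e3 i, 0) : EE)) p ((e3 i, 0) : EE)) * u p)))))) := by
    funext p
    simp only [Aop, hbeta hu]
    simp only [Fin.sum_univ_three]
    ring
  have Isum : ∀ i : Fin 3, Integrable fun p : EE =>
      ((-1 : ℝ) * ((wf p * (p.2 i * fderiv ℝ u p ((e3 i, 0) : EE))) * u p)
       + (β * ((wf p * u p) * u p)
       + (β * ((wf p * (p.2 i * fderiv ℝ u p ((0, e3 i) : EE))) * u p)
       + (σ * ((wf p * fderiv ℝ (fun q => fderiv ℝ u q ((0, e3 i) : EE)) p ((0, e3 i) : EE)) * u p)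
       + ((2 * γ) * ((wf p * fderiv ℝ (fun q => fderiv ℝ u q ((e3 i, 0) : EE)) p ((0, e3 i) : EE)) * u p)
       + α * ((wf p * fderiv ℝ (fun q => fderiv ℝ u q ((e3 i, 0) : EE)) p ((e3 i, 0) : EE)) * u p)))))) :=
    fun i => ((I1 i).const_mul (-1)).add ((I2.const_mul β).add (((I3 i).const_mul β).add
      (((I4 i).const_mul σ).add (((I5 i).const_mul (2 * γ)).add ((I6 i).const_mul α)))))
  rw [hpt, integral_finset_sum _ fun i _ => Isum i]
  -- evaluate each term with the integration-by-parts identities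
  have hterm : ∀ i : Fin 3, (∫ p : EE,
      ((-1 : ℝ) * ((wf p * (p.2 i * fderiv ℝ u p ((e3 i, 0) : EE))) * u p)
       + (β * ((wf p * u p) * u p)
       + (β * ((wf p * (p.2 i * fderiv ℝ u p ((0, e3 i) : EE))) * u p)
       + (σ * ((wf p * fderiv ℝ (fun q => fderiv ℝ u q ((0, e3 i) : EE)) p ((0, e3 i) : EE)) * u p)
       + ((2 * γ) * ((wf p * fderiv ℝ (fun q => fderiv ℝ u q ((e3 i, 0) : EE)) p ((0, e3 i) : EE)) * u p)
       + α * ((wf p * fderiv ℝ (fun q => fderiv ℝ u q ((e3 i, 0) : EE)) p ((e3 i, 0) : EE)) * u p)))))))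
      = β / 2 * Wint u - 2 * β * Qint u i + 6 * σ * Rint u i
        - σ * Bint u i - 2 * γ * Cint u i - α * Aint u i := by
    intro i
    have T1 : Integrable fun p : EE =>
        (-1 : ℝ) * ((wf p * (p.2 i * fderiv ℝ u p ((e3 i, 0) : EE))) * u p) :=
      (I1 i).const_mul (-1)
    have T2 : Integrable fun p : EE => β * ((wf p * u p) * u p) := I2.const_mul β
    have T3 : Integrable fun p : EE =>
        β * ((wf p * (p.2 i * fderiv ℝ u p ((0, e3 i) : EE))) * u p) := (I3 i).const_mul β
    have T4 : Integrable fun p : EE =>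
        σ * ((wf p * fderiv ℝ (fun q => fderiv ℝ u q ((0, e3 i) : EE)) p ((0, e3 i) : EE)) * u p) :=
      (I4 i).const_mul σ
    have T5 : Integrable fun p : EE =>
        (2 * γ) * ((wf p * fderiv ℝ (fun q => fderiv ℝ u q ((e3 i, 0) : EE)) p ((0, e3 i) : EE)) * u p) :=
      (I5 i).const_mul (2 * γ)
    have T6 : Integrable fun p : EE =>
        α * ((wf p * fderiv ℝ (fun q => fderiv ℝ u q ((e3 i, 0) : EE)) p ((e3 i, 0) : EE)) * u p) :=
      (I6 i).const_mul α
    have S5 : Integrable fun p : EE =>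
        (2 * γ) * ((wf p * fderiv ℝ (fun q => fderiv ℝ u q ((e3 i, 0) : EE)) p ((0, e3 i) : EE)) * u p)
        + α * ((wf p * fderiv ℝ (fun q => fderiv ℝ u q ((e3 i, 0) : EE)) p ((e3 i, 0) : EE)) * u p) :=
      T5.add T6
    have S4 : Integrable fun p : EE =>
        σ * ((wf p * fderiv ℝ (fun q => fderiv ℝ u q ((0, e3 i) : EE)) p ((0, e3 i) : EE)) * u p)
        + ((2 * γ) * ((wf p * fderiv ℝ (fun q => fderiv ℝ u q ((e3 i, 0) : EE)) p ((0, e3 i) : EE)) * u p)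
        + α * ((wf p * fderiv ℝ (fun q => fderiv ℝ u q ((e3 i, 0) : EE)) p ((e3 i, 0) : EE)) * u p)) :=
      T4.add S5
    have S3 : Integrable fun p : EE =>
        β * ((wf p * (p.2 i * fderiv ℝ u p ((0, e3 i) : EE))) * u p)
        + (σ * ((wf p * fderiv ℝ (fun q => fderiv ℝ u q ((0, e3 i) : EE)) p ((0, e3 i) : EE)) * u p)
        + ((2 * γ) * ((wf p * fderiv ℝ (fun q => fderiv ℝ u q ((e3 i, 0) : EE)) p ((0, e3 i) : EE)) * u p)
        + α * ((wf p * fderiv ℝ (fun q => fderiv ℝ u q ((e3 i, 0) : EE)) p ((e3 i, 0) : EE)) * u p))) :=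
      T3.add S4
    have S2 : Integrable fun p : EE =>
        β * ((wf p * u p) * u p)
        + (β * ((wf p * (p.2 i * fderiv ℝ u p ((0, e3 i) : EE))) * u p)
        + (σ * ((wf p * fderiv ℝ (fun q => fderiv ℝ u q ((0, e3 i) : EE)) p ((0, e3 i) : EE)) * u p)
        + ((2 * γ) * ((wf p * fderiv ℝ (fun q => fderiv ℝ u q ((e3 i, 0) : EE)) p ((0, e3 i) : EE)) * u p)
        + α * ((wf p * fderiv ℝ (fun q => fderiv ℝ u q ((e3 i, 0) : EE)) p ((e3 i, 0) : EE)) * u p)))) :=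
      T2.add S3
    rw [integral_add T1 S2, integral_add T2 S3, integral_add T3 S4, integral_add T4 S5,
      integral_add T5 T6,
      integral_const_mul, integral_const_mul, integral_const_mul, integral_const_mul,
      integral_const_mul, integral_const_mul,
      P1 hu hc i, P2 hu hc i, P3 hu hc i, P4 hu hc i, P5 hu hc i]
    have hW : (∫ p : EE, (wf p * u p) * u p) = Wint u := rfl
    rw [hW]
    ring
  rw [Fin.sum_univ_three, hterm 0, hterm 1, hterm 2]
  have hW : (∫ p : EE, (wf p * u p) * u p) = Wint u := rfl
  rw [hW]
  -- positivity facts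
  have hwfpos : ∀ p : EE, 0 ≤ wf p := by
    intro p; simp only [wf, Fin.sum_univ_three]; positivity
  have hQ : ∀ i : Fin 3, 0 ≤ Qint u i := by
    intro i
    apply integral_nonneg
    intro p
    simp only [Pi.zero_apply]
    nlinarith [sq_nonneg ((p.2 i) ^ 2 * u p)]
  have hD : ∀ i : Fin 3, 0 ≤ σ * Bint u i + (2 * γ * Cint u i + α * Aint u i) := by
    intro i
    have iB := int_mul_du hu hc contDiff_wf.continuous ((0, e3 i) : EE) ((0, e3 i) : EE)
    have iC := int_mul_du hu hc contDiff_wf.continuous ((e3 i, 0) : EE) ((0, e3 i) : EE)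
    have iA := int_mul_du hu hc contDiff_wf.continuous ((e3 i, 0) : EE) ((e3 i, 0) : EE)
    have hcomb : σ * Bint u i + (2 * γ * Cint u i + α * Aint u i)
        = ∫ p : EE, (σ * ((wf p * fderiv ℝ u p ((0, e3 i) : EE)) * fderiv ℝ u p ((0, e3 i) : EE))
          + ((2 * γ) * ((wf p * fderiv ℝ u p ((e3 i, 0) : EE)) * fderiv ℝ u p ((0, e3 i) : EE))
          + α * ((wf p * fderiv ℝ u p ((e3 i, 0) : EE)) * fderiv ℝ u p ((e3 i, 0) : EE)))) := by
      have j1 : Integrable fun p : EE =>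
          σ * ((wf p * fderiv ℝ u p ((0, e3 i) : EE)) * fderiv ℝ u p ((0, e3 i) : EE)) :=
        iB.const_mul σ
      have j2 : Integrable fun p : EE =>
          (2 * γ) * ((wf p * fderiv ℝ u p ((e3 i, 0) : EE)) * fderiv ℝ u p ((0, e3 i) : EE)) :=
        iC.const_mul (2 * γ)
      have j3 : Integrable fun p : EE =>
          α * ((wf p * fderiv ℝ u p ((e3 i, 0) : EE)) * fderiv ℝ u p ((e3 i, 0) : EE)) :=
        iA.const_mul α
      have j23 : Integrable fun p : EE =>
          (2 * γ) * ((wf p * fderiv ℝ u p ((e3 i, 0) : EE)) * fderiv ℝ u p ((0, e3 i) : EE))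
          + α * ((wf p * fderiv ℝ u p ((e3 i, 0) : EE)) * fderiv ℝ u p ((e3 i, 0) : EE)) :=
        j2.add j3
      simp only [Bint, Cint, Aint]
      rw [← integral_const_mul σ, ← integral_const_mul (2 * γ), ← integral_const_mul α,
        ← integral_add j2 j3, ← integral_add j1 j23]
    rw [hcomb]
    apply integral_nonneg
    intro p
    simp only [Pi.zero_apply]
    have h0 : 0 ≤ α * (fderiv ℝ u p ((e3 i, 0) : EE)) ^ 2
        + 2 * γ * (fderiv ℝ u p ((e3 i, 0) : EE)) * (fderiv ℝ u p ((0, e3 i) : EE))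
        + σ * (fderiv ℝ u p ((0, e3 i) : EE)) ^ 2 := by
      nlinarith [sq_nonneg (σ * fderiv ℝ u p ((0, e3 i) : EE) + γ * fderiv ℝ u p ((e3 i, 0) : EE)),
        mul_nonneg (sub_nonneg.2 hcoeff) (sq_nonneg (fderiv ℝ u p ((e3 i, 0) : EE))), hσ,
        sq_nonneg (fderiv ℝ u p ((e3 i, 0) : EE))]
    nlinarith [mul_nonneg (hwfpos p) h0]
  have hmono : 6 * (Rint u 0 + Rint u 1 + Rint u 2) ≤ 9 * Wint u := by
    have ir : ∀ i : Fin 3, Integrable fun p : EE => ((p.2 i) ^ 2 * u p) * u p :=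
      fun i => int_mul_u hu hc (((contDiff_coord i).pow 2).continuous.mul hu.continuous)
    have ir01 : Integrable fun p : EE =>
        ((p.2 0) ^ 2 * u p) * u p + ((p.2 1) ^ 2 * u p) * u p := (ir 0).add (ir 1)
    have ir012 : Integrable fun p : EE =>
        (((p.2 0) ^ 2 * u p) * u p + ((p.2 1) ^ 2 * u p) * u p) + ((p.2 2) ^ 2 * u p) * u p :=
      ir01.add (ir 2)
    have h := integral_mono (μ := volume)
      (f := fun p : EE => (6 : ℝ) * ((((p.2 0) ^ 2 * u p) * u p + ((p.2 1) ^ 2 * u p) * u p)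
        + ((p.2 2) ^ 2 * u p) * u p))
      (g := fun p : EE => (9 : ℝ) * ((wf p * u p) * u p))
      (ir012.const_mul 6) (I2.const_mul 9)
      (by
        intro p
        simp only [wf, Fin.sum_univ_three]
        nlinarith [sq_nonneg (u p * ((p.2 0) ^ 2 - 1)), sq_nonneg (u p * ((p.2 1) ^ 2 - 1)),
          sq_nonneg (u p * ((p.2 2) ^ 2 - 1)), sq_nonneg ((p.2 0) ^ 2 * u p),
          sq_nonneg ((p.2 1) ^ 2 * u p), sq_nonneg ((p.2 2) ^ 2 * u p)])
    rw [integral_const_mul, integral_const_mul,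
      integral_add ir01 (ir 2), integral_add (ir 0) (ir 1)] at h
    simp only [Rint, Wint]
    linarith
  have h9 := mul_le_mul_of_nonneg_left hmono hσ.le
  nlinarith [hD 0, hD 1, hD 2, mul_nonneg hβ (hQ 0), mul_nonneg hβ (hQ 1),
    mul_nonneg hβ (hQ 2), h9]

end
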